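/- Componentwise reducibility implies quasi-isometry: if α = u₁u₂u₃⋯ and β = v₁v₂v₃⋯ are partitions into finite nonempty blocks with lengths uniformly bounded by a constant C, and for each i every letter occurring in uᵢ also occurs in vᵢ, then there is a quasi-isometry from α to β. -/

import Mathlib

def IsQI {Γ : Type*} (α β : ℕ → Γ) (f : ℕ → ℕ) (A B : ℝ) : Prop :=
  1 ≤ A ∧ 0 ≤ B ∧ (∀ n, α n = β (f n)) ∧
  (∀ x y : ℕ, (1 / A) * |(x : ℝ) - (y : ℝ)| - B ≤ |(f x : ℝ) - (f y : ℝ)| ∧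
      |(f x : ℝ) - (f y : ℝ)| ≤ A * |(x : ℝ) - (y : ℝ)| + B) ∧
  (∀ m : ℕ, ∃ x : ℕ, |(m : ℝ) - (f x : ℝ)| ≤ A)

/-- `α ≤_QI β`: there is a quasi-isometry from `α` to `β`. -/
def QI {Γ : Type*} (α β : ℕ → Γ) : Prop := ∃ f A B, IsQI α β f A B

lemma block_exists (S : ℕ → ℕ) (h0 : S 0 = 0) (hgrow : ∀ k, k ≤ S k) (n : ℕ) :
    ∃ k, S k ≤ n ∧ n < S (k + 1) := by
  have hex : ∃ k, n < S k := ⟨n + 1, lt_of_lt_of_le (Nat.lt_succ_self n) (hgrow (n + 1))⟩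
  classical
  have hk0pos : Nat.find hex ≠ 0 := by
    intro h
    have := Nat.find_spec hex
    rw [h, h0] at this
    omega
  obtain ⟨k, hk⟩ := Nat.exists_eq_succ_of_ne_zero hk0pos
  refine ⟨k, ?_, ?_⟩
  · have := Nat.find_min hex (m := k) (by omega)
    omega
  · have := Nat.find_spec hex
    rw [hk] at this
    exact this

lemma aux_ub (C : ℕ) (ℓ m : ℕ → ℕ) (hℓ : ∀ i, 1 ≤ ℓ i) (hm : ∀ i, m i ≤ C)
    (x y j k fx fy : ℕ)
    (hxl : (Finset.range j).sum ℓ ≤ x) (hyu : y < (Finset.range (k + 1)).sum ℓ)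
    (hfxu : fx < (Finset.range (j + 1)).sum m) (hfyl : (Finset.range k).sum m ≤ fy) :
    (fx : ℝ) - fy ≤ C * |(x : ℝ) - y| + C := by
  have habs : (0:ℝ) ≤ C * |(x : ℝ) - y| := by positivity
  rcases le_or_gt j k with hjk | hjk
  · have h1 : (Finset.range (j + 1)).sum m ≤ (Finset.range (k + 1)).sum m :=
      Finset.sum_le_sum_of_subset (Finset.range_subset_range.2 (by omega))
    have h2 : (Finset.range (k + 1)).sum m = (Finset.range k).sum m + m k :=
      Finset.sum_range_succ m k
    have h3 : fx ≤ fy + C := by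
      have := hm k; omega
    have : (fx : ℝ) ≤ fy + C := by exact_mod_cast h3
    linarith
  · have hsum1 : (Finset.range k).sum m + (Finset.Ico k (j + 1)).sum m
        = (Finset.range (j + 1)).sum m := Finset.sum_range_add_sum_Ico m (by omega)
    have hsum2 : (Finset.Ico k (j + 1)).sum m ≤ (j + 1 - k) * C := by
      have := Finset.sum_le_card_nsmul (Finset.Ico k (j + 1)) m C (fun i _ => hm i)
      simpa [Nat.card_Ico, smul_eq_mul] using this
    have hsum3 : (Finset.range (k + 1)).sum ℓ + (Finset.Ico (k + 1) j).sum ℓ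
        = (Finset.range j).sum ℓ := Finset.sum_range_add_sum_Ico ℓ (by omega)
    have hsum4 : j - (k + 1) ≤ (Finset.Ico (k + 1) j).sum ℓ := by
      have := Finset.card_nsmul_le_sum (Finset.Ico (k + 1) j) ℓ 1 (fun i _ => hℓ i)
      simpa [Nat.card_Ico, smul_eq_mul] using this
    have hxy : y + (j - k) ≤ x := by omega
    have hfxy : fx + 1 ≤ fy + (j + 1 - k) * C := by omega
    have hjk' : (j : ℝ) - k ≤ (x : ℝ) - y := by
      have : ((y + (j - k) : ℕ) : ℝ) ≤ x := by exact_mod_cast hxy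
      push_cast [Nat.cast_sub (by omega : k ≤ j)] at this
      linarith
    have hxy' : (0:ℝ) ≤ (x:ℝ) - y := by
      have : (k:ℝ) + 1 ≤ j := by exact_mod_cast hjk
      linarith
    have habs2 : |(x:ℝ) - y| = (x:ℝ) - y := abs_of_nonneg hxy'
    have hfr : (fx : ℝ) + 1 ≤ fy + ((j : ℝ) + 1 - k) * C := by
      have : ((fx + 1 : ℕ) : ℝ) ≤ ((fy + (j + 1 - k) * C : ℕ) : ℝ) := by exact_mod_cast hfxy
      push_cast [Nat.cast_sub (by omega : k ≤ j + 1)] at this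
      linarith
    rw [habs2]
    nlinarith [hjk', hfr]

theorem componentwise_implies_QI {Γ : Type*} (α β : ℕ → Γ) (C : ℕ) (ℓ m : ℕ → ℕ)
    (hℓ : ∀ k, 1 ≤ ℓ k ∧ ℓ k ≤ C) (hm : ∀ k, 1 ≤ m k ∧ m k ≤ C)
    (hcl : ∀ k p : ℕ, (Finset.range k).sum ℓ ≤ p → p < (Finset.range (k + 1)).sum ℓ →
      ∃ q : ℕ, (Finset.range k).sum m ≤ q ∧ q < (Finset.range (k + 1)).sum m ∧ α p = β q) :
    QI α β := by
  classical
  have hC : 1 ≤ C := le_trans (hℓ 0).1 (hℓ 0).2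
  have hCR : (1:ℝ) ≤ C := by exact_mod_cast hC
  have hCpos : (0:ℝ) < C := by linarith
  have hgrowℓ : ∀ k, k ≤ (Finset.range k).sum ℓ := fun k => by
    have := Finset.card_nsmul_le_sum (Finset.range k) ℓ 1 (fun i _ => (hℓ i).1)
    simpa using this
  have hgrowm : ∀ k, k ≤ (Finset.range k).sum m := fun k => by
    have := Finset.card_nsmul_le_sum (Finset.range k) m 1 (fun i _ => (hm i).1)
    simpa using this
  obtain ⟨kb, hkb⟩ := Classical.axiomOfChoice
    (block_exists (fun k => (Finset.range k).sum ℓ) (by simp) hgrowℓ)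
  obtain ⟨km, hkm⟩ := Classical.axiomOfChoice
    (block_exists (fun k => (Finset.range k).sum m) (by simp) hgrowm)
  obtain ⟨f, hf⟩ := Classical.axiomOfChoice
    (fun n => hcl (kb n) n (hkb n).1 (hkb n).2)
  refine ⟨f, C, C, hCR, by linarith, fun n => (hf n).2.2, ?_, ?_⟩
  · intro x y
    have hub1 : (f x : ℝ) - f y ≤ C * |(x : ℝ) - y| + C :=
      aux_ub C ℓ m (fun i => (hℓ i).1) (fun i => (hm i).2) x y (kb x) (kb y) (f x) (f y)
        (hkb x).1 (hkb y).2 (hf x).2.1 (hf y).1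
    have hub2 : (f y : ℝ) - f x ≤ C * |(x : ℝ) - y| + C := by
      have := aux_ub C ℓ m (fun i => (hℓ i).1) (fun i => (hm i).2) y x (kb y) (kb x) (f y) (f x)
        (hkb y).1 (hkb x).2 (hf y).2.1 (hf x).1
      rwa [abs_sub_comm] at this
    have hlb1 : (x : ℝ) - y ≤ C * |(f x : ℝ) - f y| + C :=
      aux_ub C m ℓ (fun i => (hm i).1) (fun i => (hℓ i).2) (f x) (f y) (kb x) (kb y) x y
        (hf x).1 (hf y).2.1 (hkb x).2 (hkb y).1
    have hlb2 : (y : ℝ) - x ≤ C * |(f x : ℝ) - f y| + C := by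
      have := aux_ub C m ℓ (fun i => (hm i).1) (fun i => (hℓ i).2) (f y) (f x) (kb y) (kb x) y x
        (hf y).1 (hf x).2.1 (hkb y).2 (hkb x).1
      rwa [abs_sub_comm] at this
    have hkey : |(x:ℝ) - y| ≤ C * |(f x : ℝ) - f y| + C * C := by
      rcases abs_sub_le_iff.1 (le_refl |(x:ℝ) - y|) with _
      have h := abs_sub_le_iff.2 ⟨hlb1, hlb2⟩
      nlinarith [abs_nonneg ((f x : ℝ) - f y)]
    constructor
    · rw [one_div, sub_le_iff_le_add, inv_mul_le_iff₀ hCpos]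
      nlinarith [hkey]
    · exact abs_sub_le_iff.2 ⟨hub1, hub2⟩
  · intro n
    set k := km n with hk
    refine ⟨(Finset.range k).sum ℓ, ?_⟩
    set p := (Finset.range k).sum ℓ with hp
    have hp1 : (Finset.range k).sum ℓ ≤ p := le_refl _
    have hp2 : p < (Finset.range (k + 1)).sum ℓ := by
      have h1 : (Finset.range (k + 1)).sum ℓ = (Finset.range k).sum ℓ + ℓ k :=
        Finset.sum_range_succ ℓ k
      have := (hℓ k).1
      omega
    -- kb p = k by uniqueness of blocks
    have hmono : ∀ a b : ℕ, a ≤ b → (Finset.range a).sum ℓ ≤ (Finset.range b).sum ℓ :=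
      fun a b h => Finset.sum_le_sum_of_subset (Finset.range_subset_range.2 h)
    have hkbp : kb p = k := by
      by_contra hne
      rcases lt_or_gt_of_ne hne with h | h
      · have := hmono (kb p + 1) k (by omega)
        have h1 := (hkb p).2
        omega
      · have := hmono (k + 1) (kb p) (by omega)
        have h1 := (hkb p).1
        omega
    have hfp1 : (Finset.range k).sum m ≤ f p := by
      have := (hf p).1; rwa [hkbp] at this
    have hfp2 : f p < (Finset.range (k + 1)).sum m := by
      have := (hf p).2.1; rwa [hkbp] at this
    have hn1 : (Finset.range k).sum m ≤ n := (hkm n).1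
    have hn2 : n < (Finset.range (k + 1)).sum m := (hkm n).2
    have hsucc : (Finset.range (k + 1)).sum m = (Finset.range k).sum m + m k :=
      Finset.sum_range_succ m k
    have hmk := (hm k).2
    have h1 : n ≤ f p + C := by omega
    have h2 : f p ≤ n + C := by omega
    rw [abs_le]
    constructor
    · have : (f p : ℝ) ≤ (n : ℝ) + C := by exact_mod_cast h2
      linarith
    · have : (n:ℝ) ≤ (f p : ℝ) + C := by exact_mod_cast h1
      linarith
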